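/- The set of partitions of 2n in which every odd part appears an even number of times is in bijection with the set of equivalence classes of conjugacy classes of the hyperoctahedral group W_n (the Weyl group of type C_n, realized as signed permutations of {1,...,n}), where two conjugacy classes of W_n are equivalent iff they lie in the same conjugacy class of the symmetric group S_{2n} under the natural embedding of W_n into S_{2n}. -/

import Mathlib

/-- The fixed-point-free involution `τ : i ↔ i'` on the `2n`-element set `Fin n × Bool`. -/
def tauInv (n : ℕ) : Equiv.Perm (Fin n × Bool) :=
  Equiv.prodCongr (Equiv.refl (Fin n)) ⟨Bool.not, Bool.not, Bool.not_not, Bool.not_not⟩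

/-- The hyperoctahedral group `Wₙ`: the subgroup of the symmetric group on the `2n`-element set
`{1,…,n,n',…,1'}` (modelled as `Fin n × Bool`) of permutations commuting with `τ`. -/
def hyperoct (n : ℕ) : Subgroup (Equiv.Perm (Fin n × Bool)) :=
  Subgroup.centralizer {tauInv n}

/-- The equivalence relation on `Wₙ` whose classes are the equivalence classes of conjugacy
classes of `Wₙ`: two elements are equivalent iff they are conjugate in the full symmetric
group `S_{2n}`. -/
def conjS2n (n : ℕ) : Setoid (hyperoct n) :=
  ⟨fun w w' => IsConj (w : Equiv.Perm (Fin n × Bool)) (w' : Equiv.Perm (Fin n × Bool)),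
    ⟨fun _ => IsConj.refl _, IsConj.symm, IsConj.trans⟩⟩


open Equiv Equiv.Perm

section AuxHyperoct
variable {α β : Type*} [DecidableEq α] [Fintype α] [DecidableEq β] [Fintype β]

theorem even_card_of_fpf_involution (τ : Perm α) (hinv : τ * τ = 1) (hfpf : ∀ x, τ x ≠ x)
    (S : Finset α) (hstab : ∀ x ∈ S, τ x ∈ S) : Even S.card := by
  have hττ : ∀ x, τ (τ x) = x := fun x => by
    have := congrArg (fun f : Perm α => f x) hinv; simpa using this
  have hiff : ∀ x, x ∈ S ↔ τ x ∈ S := fun x =>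
    ⟨hstab x, fun h => by have := hstab _ h; rwa [hττ] at this⟩
  rcases S.eq_empty_or_nonempty with rfl | ⟨x₀, hx₀⟩
  · simp
  · set i : Perm {x // x ∈ S} := τ.subtypePerm (fun x => (hiff x).symm) with hi
    have hi2 : i * i = 1 := by
      ext x
      simp [hi, Equiv.Perm.subtypePerm_apply, hττ]
    have hine : i ≠ 1 := by
      intro h
      have := congrArg (fun f : Perm {x // x ∈ S} => (f ⟨x₀, hx₀⟩ : α)) h
      simp [hi, Equiv.Perm.subtypePerm_apply] at this
      exact hfpf x₀ this
    have horder : orderOf i = 2 := by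
      have := orderOf_eq_prime (p := 2) hi2 hine
      simpa using this
    obtain ⟨k, hk⟩ := Equiv.Perm.cycleType_prime_order (by rw [horder]; exact Nat.prime_two)
    have hsupp : i.support = Finset.univ := by
      ext x
      simp only [Equiv.Perm.mem_support, Finset.mem_univ, iff_true]
      intro h
      exact hfpf x (congrArg Subtype.val h)
    have hcard : Fintype.card {x // x ∈ S} = i.cycleType.sum := by
      rw [Equiv.Perm.sum_cycleType, hsupp]; simp
    have : S.card = i.cycleType.sum := by
      rw [← hcard, Fintype.card_coe]
    rw [this, hk, horder, Multiset.sum_replicate]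
    exact ⟨k + 1, by ring⟩

theorem even_count_partition {τ σ : Perm α} (hinv : τ * τ = 1) (hfpf : ∀ x, τ x ≠ x)
    (hcomm : τ * σ = σ * τ) {i : ℕ} (hi : Odd i) :
    Even (σ.partition.parts.count i) := by
  have hconj : τ * σ * τ⁻¹ = σ := by rw [hcomm, mul_assoc, mul_inv_cancel, mul_one]
  rw [Equiv.Perm.parts_partition, Multiset.count_add]
  by_cases h1 : i = 1
  · subst h1
    have hz : σ.cycleType.count 1 = 0 :=
      Multiset.count_eq_zero_of_notMem fun h => by
        have := Equiv.Perm.two_le_of_mem_cycleType h; omega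
    rw [hz, Multiset.count_replicate, if_pos rfl, zero_add]
    have hsupp_stab : ∀ x ∈ σ.support, τ x ∈ σ.support := by
      intro x hx
      rw [Equiv.Perm.mem_support] at hx ⊢
      intro h
      apply hx
      have : σ (τ x) = τ (σ x) := by
        have := congrArg (fun f : Perm α => f x) hcomm
        simpa using this.symm
      rw [this] at h
      exact τ.injective h
    have h1 : Even σ.support.card := even_card_of_fpf_involution τ hinv hfpf _ hsupp_stab
    have h2 : Even (Fintype.card α) := by
      simpa [Finset.card_univ] using
        even_card_of_fpf_involution τ hinv hfpf Finset.univ (by simp)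
    obtain ⟨a, ha⟩ := h1
    obtain ⟨b, hb⟩ := h2
    have hle : σ.support.card ≤ Fintype.card α := by
      simpa [Finset.card_univ] using Finset.card_le_univ σ.support
    exact ⟨b - a, by omega⟩
  · rw [Multiset.count_replicate, if_neg (fun h => h1 h.symm), add_zero]
    set F := σ.cycleFactorsFinset.filter (fun c => c.support.card = i) with hF
    have hcount : σ.cycleType.count i = F.card := by
      rw [Equiv.Perm.cycleType_def, Multiset.count_map]
      rw [show F.card = Multiset.card
        (Multiset.filter (fun c : Perm α => c.support.card = i) σ.cycleFactorsFinset.val) from rfl]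
      congr 1
      apply Multiset.filter_congr
      intro x _
      simp [Function.comp, eq_comm]
    set S := F.biUnion (fun c => c.support) with hS
    have hdisj : ∀ c ∈ F, ∀ d ∈ F, c ≠ d → Disjoint c.support d.support := by
      intro c hc d hd hcd
      exact Equiv.Perm.Disjoint.disjoint_support
        (σ.cycleFactorsFinset_pairwise_disjoint (Finset.mem_filter.1 hc).1
          (Finset.mem_filter.1 hd).1 hcd)
    have hScard : S.card = i * F.card := by
      rw [hS, Finset.card_biUnion hdisj]
      rw [Finset.sum_congr rfl (fun c hc => (Finset.mem_filter.1 hc).2)]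
      rw [Finset.sum_const, smul_eq_mul, mul_comm]
    have hstab : ∀ x ∈ S, τ x ∈ S := by
      intro x hx
      rw [hS, Finset.mem_biUnion] at hx ⊢
      obtain ⟨c, hc, hxc⟩ := hx
      obtain ⟨hc1, hc2⟩ := Finset.mem_filter.1 hc
      refine ⟨τ * c * τ⁻¹, Finset.mem_filter.2 ⟨?_, ?_⟩, ?_⟩
      · rw [← hconj]; exact (Equiv.Perm.mem_cycleFactorsFinset_conj σ τ c).2 hc1
      · rw [Equiv.Perm.support_conj, Finset.card_map, hc2]
      · rw [Equiv.Perm.support_conj, Finset.mem_map]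
        exact ⟨x, hxc, rfl⟩
    have hevenS : Even S.card := even_card_of_fpf_involution τ hinv hfpf S hstab
    rw [hScard, Nat.even_mul] at hevenS
    rw [hcount]
    rcases hevenS with h | h
    · exact absurd hi (by simpa [Nat.not_odd_iff_even] using h)
    · exact h

theorem permCongr_mul (e : α ≃ β) (σ τ : Perm α) :
    e.permCongr (σ * τ) = e.permCongr σ * e.permCongr τ := by
  ext x; simp

theorem permCongr_symm_permCongr (e : α ≃ β) (σ : Perm α) :
    e.symm.permCongr (e.permCongr σ) = σ := by
  ext x; simp

theorem cycleType_permCongr (e : α ≃ β) (σ : Perm α) :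
    (e.permCongr σ).cycleType = σ.cycleType := by
  classical
  let f : α ≃ {b : β // (fun _ => True) b} := e.trans (Equiv.subtypeUnivEquiv fun _ => trivial).symm
  have hext : e.permCongr σ = σ.extendDomain f := by
    ext x
    rw [Equiv.Perm.extendDomain_apply_subtype σ f trivial]
    simp [f, Equiv.subtypeUnivEquiv]
  rw [hext, Equiv.Perm.cycleType_extendDomain]

theorem cycleType_sumCongr (σ : Perm α) (τ : Perm β) :
    (Equiv.Perm.sumCongr σ τ).cycleType = σ.cycleType + τ.cycleType := by
  classical
  have h1 : (Equiv.Perm.sumCongr σ (1 : Perm β)).cycleType = σ.cycleType := by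
    let f : α ≃ {x : α ⊕ β // Sum.isLeft x = true} :=
      ⟨fun a => ⟨Sum.inl a, rfl⟩,
       fun x => x.1.getLeft (by cases x with | mk v hv => cases v <;> simp_all),
       fun a => rfl, fun x => by cases x with | mk v hv => cases v <;> simp_all⟩
    have hext : Equiv.Perm.sumCongr σ (1 : Perm β) = σ.extendDomain f := by
      ext x
      cases x with
      | inl a =>
        rw [show (Sum.inl a : α ⊕ β) = (f a : α ⊕ β) from rfl,
          Equiv.Perm.extendDomain_apply_image]
        rfl
      | inr b =>
        rw [Equiv.Perm.extendDomain_apply_not_subtype σ f (by simp)]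
        rfl
    rw [hext, Equiv.Perm.cycleType_extendDomain]
  have h2 : (Equiv.Perm.sumCongr (1 : Perm α) τ).cycleType = τ.cycleType := by
    let f : β ≃ {x : α ⊕ β // Sum.isRight x = true} :=
      ⟨fun b => ⟨Sum.inr b, rfl⟩,
       fun x => x.1.getRight (by cases x with | mk v hv => cases v <;> simp_all),
       fun b => rfl, fun x => by cases x with | mk v hv => cases v <;> simp_all⟩
    have hext : Equiv.Perm.sumCongr (1 : Perm α) τ = τ.extendDomain f := by
      ext x
      cases x with
      | inr b =>
        rw [show (Sum.inr b : α ⊕ β) = (f b : α ⊕ β) from rfl,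
          Equiv.Perm.extendDomain_apply_image]
        rfl
      | inl a =>
        rw [Equiv.Perm.extendDomain_apply_not_subtype τ f (by simp)]
        rfl
    rw [hext, Equiv.Perm.cycleType_extendDomain]
  have hmul : Equiv.Perm.sumCongr σ τ =
      Equiv.Perm.sumCongr σ (1 : Perm β) * Equiv.Perm.sumCongr (1 : Perm α) τ := by
    rw [Equiv.Perm.sumCongr_mul, mul_one, one_mul]
  have hdisj : Equiv.Perm.Disjoint (Equiv.Perm.sumCongr σ (1 : Perm β))
      (Equiv.Perm.sumCongr (1 : Perm α) τ) := by
    intro x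
    cases x with
    | inl a => right; rfl
    | inr b => left; rfl
  rw [hmul, hdisj.cycleType_mul, h1, h2]

def doubleEquiv (k : ℕ) : Fin k × Bool ≃ Fin (2 * k) where
  toFun x := ⟨x.1.val + if x.2 then k else 0, by
    rcases x with ⟨⟨i, hi⟩, b⟩; cases b <;> simp <;> omega⟩
  invFun j := if h : j.val < k then (⟨j.val, h⟩, false)
    else (⟨j.val - k, by have := j.isLt; omega⟩, true)
  left_inv := by
    rintro ⟨⟨i, hi⟩, b⟩
    cases b
    · simp [hi]
    · have h : ¬ (i + k < k) := by omega
      simp [h]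
  right_inv := by
    rintro ⟨j, hj⟩
    by_cases h : j < k <;> simp [h] <;> omega

theorem finRotate_val_apply {n : ℕ} (hn : 0 < n) (x : Fin n) :
    (finRotate n x).val = (x.val + 1) % n := by
  cases n with
  | zero => omega
  | succ n' =>
    rw [finRotate_succ_apply, Fin.val_add, Fin.val_one']
    cases n' with
    | zero => omega
    | succ n'' => rw [show (1 % (n'' + 1 + 1)) = 1 from Nat.mod_eq_of_lt (by omega)]

theorem finRotate_pow_val_apply {n : ℕ} (hn : 0 < n) (m : ℕ) (x : Fin n) :
    (((finRotate n) ^ m) x).val = (x.val + m) % n := by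
  induction m with
  | zero => simp [Nat.mod_eq_of_lt x.isLt]
  | succ m ih =>
    rw [pow_succ', Equiv.Perm.mul_apply, finRotate_val_apply hn, ih, Nat.mod_add_mod]
    congr 1 <;> omega

theorem doubleEquiv_tauInv (k : ℕ) (hk : 0 < k) :
    (doubleEquiv k).permCongr (tauInv k) = (finRotate (2 * k)) ^ k := by
  apply Equiv.ext
  intro x
  apply Fin.ext
  rw [finRotate_pow_val_apply (by omega) k x]
  simp only [Equiv.permCongr_apply]
  rcases Nat.lt_or_ge x.val k with h | h
  · have : (x.val + k) % (2 * k) = x.val + k := Nat.mod_eq_of_lt (by omega)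
    rw [this]
    simp [doubleEquiv, tauInv, h]
  · have hx := x.isLt
    have hxk : x.val + k = (x.val - k) + 1 * (2 * k) := by omega
    rw [hxk, Nat.add_mul_mod_self_right, Nat.mod_eq_of_lt (by omega)]
    have h' : ¬ (x.val < k) := by omega
    simp [doubleEquiv, tauInv, h']

theorem even_gadget (k : ℕ) (hk : 0 < k) :
    ∃ g : Perm (Fin k × Bool), g * tauInv k = tauInv k * g ∧ g.cycleType = {2 * k} := by
  set e := doubleEquiv k
  refine ⟨e.symm.permCongr (finRotate (2 * k)), ?_, ?_⟩
  · have htau : tauInv k = e.symm.permCongr ((finRotate (2 * k)) ^ k) := by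
      rw [← doubleEquiv_tauInv k hk, permCongr_symm_permCongr]
    rw [htau, ← permCongr_mul, ← permCongr_mul]
    congr 1
    exact (Commute.refl (finRotate (2 * k))).pow_right k
  · rw [cycleType_permCongr]
    exact cycleType_finRotate_of_le (by omega)

theorem odd_gadget (m : ℕ) (hm : 2 ≤ m) :
    ∃ g : Perm (Fin m × Bool), g * tauInv m = tauInv m * g ∧ g.cycleType = {m, m} := by
  refine ⟨Equiv.prodCongr (finRotate m) (Equiv.refl Bool), ?_, ?_⟩
  · ext x <;> simp [tauInv]
  · let e : Fin m × Bool ≃ Fin m ⊕ Fin m :=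
      (Equiv.prodComm (Fin m) Bool).trans (Equiv.boolProdEquivSum (Fin m))
    have key : e.permCongr (Equiv.prodCongr (finRotate m) (Equiv.refl Bool)) =
        Equiv.Perm.sumCongr (finRotate m) (finRotate m) := by
      ext x
      rcases x with a | a <;> simp [e, Equiv.boolProdEquivSum]
    rw [← cycleType_permCongr e, key, cycleType_sumCongr,
      cycleType_finRotate_of_le hm, Multiset.singleton_add]
    rfl

theorem combine (k j n : ℕ) (h : k + j = n) (g : Perm (Fin k × Bool)) (w : Perm (Fin j × Bool))
    (hg : g * tauInv k = tauInv k * g) (hw : w * tauInv j = tauInv j * w) :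
    ∃ W : Perm (Fin n × Bool), W * tauInv n = tauInv n * W ∧
      W.cycleType = g.cycleType + w.cycleType := by
  let e : Fin n × Bool ≃ (Fin k × Bool) ⊕ (Fin j × Bool) :=
    (Equiv.prodCongr ((finCongr h.symm).trans finSumFinEquiv.symm) (Equiv.refl Bool)).trans
      (Equiv.sumProdDistrib _ _ _)
  have key : e.permCongr (tauInv n) = Equiv.Perm.sumCongr (tauInv k) (tauInv j) := by
    ext x
    rcases x with ⟨a, b⟩ | ⟨a, b⟩ <;> simp [e, tauInv]
  have key2 : tauInv n = e.symm.permCongr (Equiv.Perm.sumCongr (tauInv k) (tauInv j)) := by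
    rw [← key, permCongr_symm_permCongr]
  refine ⟨e.symm.permCongr (Equiv.Perm.sumCongr g w), ?_, ?_⟩
  · rw [key2, ← permCongr_mul, ← permCongr_mul, Equiv.Perm.sumCongr_mul,
      Equiv.Perm.sumCongr_mul, hg, hw]
  · rw [cycleType_permCongr, cycleType_sumCongr]

theorem exists_comm_cycleType (q : Multiset ℕ) :
    ∀ n : ℕ, (∀ m ∈ q, 2 ≤ m) → (∀ i, Odd i → Even (q.count i)) → q.sum ≤ 2 * n →
    ∃ W : Perm (Fin n × Bool), W * tauInv n = tauInv n * W ∧ W.cycleType = q := by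
  induction q using Multiset.strongInductionOn with
  | ih q IH =>
    intro n h2 hodd hsum
    by_cases hq0 : q = 0
    · exact ⟨1, by simp, by simpa [hq0] using Equiv.Perm.cycleType_one⟩
    obtain ⟨m, hm⟩ := Multiset.exists_mem_of_ne_zero hq0
    rcases Nat.even_or_odd m with he | ho
    · obtain ⟨q', rfl⟩ := Multiset.exists_cons_of_mem hm
      obtain ⟨k, hk⟩ := he
      have hm2 : 2 ≤ m := h2 m hm
      have hsum' : m + q'.sum ≤ 2 * n := by simpa [Multiset.sum_cons] using hsum
      have hkn : k ≤ n := by omega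
      obtain ⟨w, hwc, hwt⟩ := IH q' (Multiset.lt_cons_self q' m) (n - k)
        (fun x hx => h2 x (Multiset.mem_cons_of_mem hx))
        (fun i hi => by
          have := hodd i hi
          rcases eq_or_ne i m with rfl | hne
          · exact absurd hi (by simp [Nat.not_odd_iff_even, hk])
          · simpa [Multiset.count_cons, if_neg, hne] using this)
        (by omega)
      obtain ⟨g, hgc, hgt⟩ := even_gadget k (by omega)
      obtain ⟨W, hWc, hWt⟩ := combine k (n - k) n (by omega) g w hgc hwc
      refine ⟨W, hWc, ?_⟩
      rw [hWt, hgt, hwt, Multiset.singleton_add]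
      congr 1
      omega
    · have hcount : 2 ≤ q.count m := by
        have h1 : 1 ≤ q.count m := Multiset.one_le_count_iff_mem.2 hm
        obtain ⟨r, hr⟩ := hodd m ho
        omega
      have hm2 : m ∈ q.erase m := by
        rw [← Multiset.count_pos, Multiset.count_erase_self]; omega
      set q' := (q.erase m).erase m with hq'
      have hq : q = m ::ₘ m ::ₘ q' := by
        rw [hq', Multiset.cons_erase hm2, Multiset.cons_erase hm]
      have hmem : ∀ x ∈ q', x ∈ q := fun x hx =>
        Multiset.mem_of_mem_erase (Multiset.mem_of_mem_erase hx)
      have hm2' : 2 ≤ m := h2 m hm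
      have hsum' : m + m + q'.sum = q.sum := by rw [hq]; simp [Multiset.sum_cons]; ring
      have hmn : m ≤ n := by omega
      obtain ⟨w, hwc, hwt⟩ := IH q'
        (by rw [hq]; exact lt_trans (Multiset.lt_cons_self q' m) (Multiset.lt_cons_self (m ::ₘ q') m))
        (n - m)
        (fun x hx => h2 x (hmem x hx))
        (fun i hi => by
          have hcq := hodd i hi
          rcases eq_or_ne i m with rfl | hne
          · have : q'.count i = q.count i - 2 := by
              rw [hq', Multiset.count_erase_self, Multiset.count_erase_self]; omega
            obtain ⟨r, hr⟩ := hcq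
            rw [this]
            exact ⟨r - 1, by omega⟩
          · have : q'.count i = q.count i := by
              rw [hq', Multiset.count_erase_of_ne hne, Multiset.count_erase_of_ne hne]
            rw [this]; exact hcq)
        (by omega)
      obtain ⟨g, hgc, hgt⟩ := odd_gadget m hm2'
      obtain ⟨W, hWc, hWt⟩ := combine m (n - m) n (by omega) g w hgc hwc
      refine ⟨W, hWc, ?_⟩
      rw [hWt, hgt, hwt, hq, Multiset.insert_eq_cons, Multiset.cons_add,
        Multiset.singleton_add]

theorem tauInv_sq (n : ℕ) : tauInv n * tauInv n = 1 := by
  ext x <;> simp [tauInv]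

theorem tauInv_fpf (n : ℕ) (x : Fin n × Bool) : tauInv n x ≠ x := by
  rcases x with ⟨a, b⟩
  simp [tauInv]

theorem hyperoct_comm {n : ℕ} (w : hyperoct n) :
    tauInv n * (w : Perm (Fin n × Bool)) = (w : Perm (Fin n × Bool)) * tauInv n :=
  (Subgroup.mem_centralizer_iff.1 w.2) (tauInv n) rfl

end AuxHyperoct

/-- The set of equivalence classes of conjugacy classes of the hyperoctahedral
group `Wₙ ⊂ S_{2n}` (two conjugacy classes being equivalent iff they lie in the same
`S_{2n}`-conjugacy class) is in bijection with the set of partitions of `2n` in which every odd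
part appears an even number of times; the bijection sends the class of `w` to its cycle-type
partition as a permutation of the `2n`-element set. -/
theorem stmt3 (n : ℕ) :
    ∃ e : Quotient (conjS2n n) ≃
      {p : (Fintype.card (Fin n × Bool)).Partition // ∀ i, Odd i → Even (p.parts.count i)},
      ∀ w : hyperoct n,
        (e (Quotient.mk (conjS2n n) w)).val =
          Equiv.Perm.partition (w : Equiv.Perm (Fin n × Bool)) := by
  classical
  set N := Fintype.card (Fin n × Bool) with hN
  have hN2 : N = 2 * n := by simp [hN, Fintype.card_prod, mul_comm]
  -- the map
  let F : hyperoct n → {p : N.Partition // ∀ i, Odd i → Even (p.parts.count i)} :=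
    fun w => ⟨Equiv.Perm.partition (w : Perm (Fin n × Bool)),
      fun i hi => even_count_partition (tauInv_sq n) (tauInv_fpf n) (hyperoct_comm w) hi⟩
  let f : Quotient (conjS2n n) → {p : N.Partition // ∀ i, Odd i → Even (p.parts.count i)} :=
    Quotient.lift F (fun a b hab => Subtype.ext (Equiv.Perm.partition_eq_of_isConj.1 hab))
  have hinj : Function.Injective f := by
    intro x y
    induction x using Quotient.ind
    induction y using Quotient.ind
    intro h
    exact Quotient.sound (Equiv.Perm.partition_eq_of_isConj.2 (congrArg Subtype.val h))
  have hsurj : Function.Surjective f := by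
    rintro ⟨p, hp⟩
    set q := p.parts.filter (fun x => 2 ≤ x) with hq
    set r := p.parts.filter (fun x => ¬ 2 ≤ x) with hr
    have hqr : q + r = p.parts := Multiset.filter_add_not _ _
    have hr1 : r = Multiset.replicate (Multiset.card r) 1 := by
      rw [Multiset.eq_replicate_card]
      intro x hx
      have h1 := p.parts_pos (Multiset.mem_of_mem_filter hx)
      have h2 := (Multiset.mem_filter.1 hx).2
      omega
    have hsum : q.sum + r.sum = N := by
      rw [← Multiset.sum_add, hqr, p.parts_sum]
    have hrsum : r.sum = Multiset.card r := by
      conv_lhs => rw [hr1]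
      rw [Multiset.sum_replicate, smul_eq_mul, mul_one]
    obtain ⟨W, hWc, hWt⟩ := exists_comm_cycleType q n
      (fun m hm => (Multiset.mem_filter.1 hm).2)
      (fun i hi => by
        rcases eq_or_ne i 1 with rfl | hne
        · rw [hq, Multiset.count_filter]
          simp
        · rw [hq, Multiset.count_filter, if_pos]
          · exact hp i hi
          · rcases hi with ⟨t, ht⟩; omega)
      (by omega)
    have hWmem : W ∈ hyperoct n := by
      rw [hyperoct, Subgroup.mem_centralizer_iff]
      rintro h rfl
      exact hWc.symm
    refine ⟨Quotient.mk (conjS2n n) ⟨W, hWmem⟩, ?_⟩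
    apply Subtype.ext
    show Equiv.Perm.partition W = p
    apply Nat.Partition.ext
    rw [Equiv.Perm.parts_partition, hWt, ← hqr, hr1]
    congr 1
    congr 1
    rw [← Equiv.Perm.sum_cycleType, hWt]
    omega
  refine ⟨Equiv.ofBijective f ⟨hinj, hsurj⟩, fun w => ?_⟩
  rfl
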